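/- arXiv:2307.09593 — 7 statements merged into one kernel-verified Lean document; each statement's English description precedes it below -/
import Mathlib

section
/- Let 0 < ε < 1. Then for every real t, log(1 − ε + ε·e^t) ≥ log(2 − ε) + (t + log ε)/(2 − ε). -/
/-! The bound is the tangent line of the convex function `t ↦ log (1 - ε + ε eᵗ)` at `t = log (1/ε)`.
Substituting `s = t + log ε` and `a = 1 - ε`, it becomes `(1 + a) e^{s/(1+a)} ≤ a + eˢ`, which is
convexity of `exp` between `0` and `s` with weights `a/(1+a)` and `1/(1+a)`. -/

open Real

lemma one_add_mul_exp_div_le_add_exp {a : ℝ} (ha : 0 ≤ a) (s : ℝ) :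
    (1 + a) * exp (s / (1 + a)) ≤ a + exp s := by
  have hpos : 0 < 1 + a := by linarith
  have hconv := convexOn_exp.2 (Set.mem_univ 0) (Set.mem_univ s)
    (div_nonneg ha hpos.le) (inv_nonneg.2 hpos.le) (by field_simp; ring)
  simp only [smul_eq_mul, mul_zero, zero_add, exp_zero, mul_one] at hconv
  calc (1 + a) * exp (s / (1 + a))
      = (1 + a) * exp ((1 + a)⁻¹ * s) := by rw [div_eq_inv_mul]
    _ ≤ (1 + a) * (a / (1 + a) + (1 + a)⁻¹ * exp s) := by gcongr
    _ = a + exp s := by field_simp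

lemma log_one_add_add_div_le_log_add_exp {a : ℝ} (ha : 0 ≤ a) (s : ℝ) :
    log (1 + a) + s / (1 + a) ≤ log (a + exp s) := by
  have hpos : 0 < 1 + a := by linarith
  rw [← log_exp (s / (1 + a)), ← log_mul hpos.ne' (exp_pos _).ne']
  exact log_le_log (by positivity) (one_add_mul_exp_div_le_add_exp ha s)

/-- Tangent-line (convexity) bound: log(1 - ε + ε e^t) ≥ log(2 - ε) + (t + log ε)/(2 - ε). -/
theorem stmt_6 (ε : ℝ) (hε0 : 0 < ε) (hε1 : ε < 1) (t : ℝ) :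
    Real.log (1 - ε + ε * Real.exp t) ≥
      Real.log (2 - ε) + (t + Real.log ε) / (2 - ε) := by
  have hexp : ε * exp t = exp (t + log ε) := by rw [exp_add, exp_log hε0, mul_comm]
  have htwo : (2 : ℝ) - ε = 1 + (1 - ε) := by ring
  rw [hexp, htwo]
  exact log_one_add_add_div_le_log_add_exp (by linarith) _
end

section
/- Let 0 < ε ≤ e^{−3} and set δ = √(2ε − ε²). Then for every real t with t ≥ log(1/ε), one has ε·δ − (1 − ε)·log(1 − ε + ε·e^t) ≤ (1/2)·(log(1/ε) − t). -/
/-- Key upper bound: for t ≥ log(1/ε),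
ε δ - (1-ε) log(1 - ε + ε e^t) ≤ (1/2)(log(1/ε) - t). -/
theorem stmt_8 (ε : ℝ) (hε0 : 0 < ε) (hε1 : ε ≤ Real.exp (-3))
    (δ : ℝ) (hδ : δ = Real.sqrt (2 * ε - ε ^ 2))
    (t : ℝ) (ht : t ≥ Real.log (1 / ε)) :
    ε * δ - (1 - ε) * Real.log (1 - ε + ε * Real.exp t) ≤
      (1 / 2) * (Real.log (1 / ε) - t) := by
  -- ε ≤ 1/20
  have hexp3 : (20 : ℝ) < Real.exp 3 := by
    have h := Real.exp_one_gt_d9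
    have : Real.exp 3 = (Real.exp 1) ^ 3 := by
      rw [← Real.exp_nat_mul]; norm_num
    have h27 : (20:ℝ) < 2.7182818283 ^ 3 := by norm_num
    rw [this]
    calc (20:ℝ) < 2.7182818283 ^ 3 := h27
    _ ≤ Real.exp 1 ^ 3 := pow_le_pow_left₀ (by norm_num) h.le 3
  have hε20 : ε ≤ 1 / 20 := by
    refine hε1.trans ?_
    rw [Real.exp_neg, inv_le_comm₀ (Real.exp_pos 3) (by norm_num)]
    linarith
  -- δ ≤ 1
  have hδ0 : 0 ≤ δ := hδ ▸ Real.sqrt_nonneg _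
  have hδ1 : δ ≤ 1 := by
    rw [hδ]
    refine Real.sqrt_le_one.mpr ?_
    nlinarith
  -- ε e^t ≥ 1
  have h1ε : (0:ℝ) < 1 / ε := by positivity
  have hexpt : 1 / ε ≤ Real.exp t := by
    calc 1 / ε = Real.exp (Real.log (1 / ε)) := (Real.exp_log h1ε).symm
    _ ≤ Real.exp t := Real.exp_le_exp.mpr ht
  have het : 1 ≤ ε * Real.exp t := by
    rw [div_le_iff₀ hε0] at hexpt
    nlinarith [hexpt]
  have hargpos : (0:ℝ) < ε * Real.exp t := by positivity
  have harg : (3/2 : ℝ) ≤ 1 - ε + ε * Real.exp t := by linarith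
  set X := Real.log (1 - ε + ε * Real.exp t) with hX
  -- X ≥ t - log(1/ε)
  have h1 : t - Real.log (1 / ε) ≤ X := by
    have hmono : Real.log (ε * Real.exp t) ≤ X := by
      apply Real.log_le_log hargpos
      linarith
    have : Real.log (ε * Real.exp t) = Real.log ε + t := by
      rw [Real.log_mul (ne_of_gt hε0) (ne_of_gt (Real.exp_pos t)), Real.log_exp]
    rw [this] at hmono
    rw [one_div, Real.log_inv]
    linarith
  -- X ≥ 1/3
  have h2 : (1/3 : ℝ) ≤ X := by
    have hl : (1/3 : ℝ) ≤ Real.log (3/2) := by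
      rw [Real.le_log_iff_exp_le (by norm_num : (0:ℝ) < 3/2)]
      have := Real.add_one_le_exp (-(1/3) : ℝ)
      have h3 : Real.exp (1/3) * Real.exp (-(1/3)) = 1 := by
        rw [← Real.exp_add]; norm_num
      nlinarith [Real.exp_pos (1/3 : ℝ), Real.exp_pos (-(1/3) : ℝ)]
    refine hl.trans ?_
    apply Real.log_le_log (by norm_num) harg
  -- conclude
  have hs : 0 ≤ t - Real.log (1 / ε) := by linarith
  nlinarith [mul_nonneg (by linarith : (0:ℝ) ≤ 1 - ε) (by linarith : (0:ℝ) ≤ X - (t - Real.log (1/ε))),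
    mul_nonneg (by linarith : (0:ℝ) ≤ 1 - ε) (by linarith : (0:ℝ) ≤ X - 1/3),
    mul_nonneg hε0.le hδ0, mul_nonneg (by linarith : (0:ℝ) ≤ ε) hs]
end

section
/- Let 0 < ε ≤ e^{−3}, set δ = √(2ε − ε²), and define u₁(t) = (1 + ε·e^t/(1−ε))^{−1} and u₂(t) = (e^{−t}/ε)·(ε·δ − (1−ε)·log(1 − ε + ε·e^t)). Then for every t > log(1/ε): u₂(t) < 0, and the ratio satisfies |u₁(t)/u₂(t)| ≤ 2/(t − log(1/ε)). -/
/-- For t > log(1/ε), the second component u₂ is negative and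
|u₁(t)/u₂(t)| ≤ 2/(t - log(1/ε)). -/
theorem stmt_9 (ε : ℝ) (hε0 : 0 < ε) (hε1 : ε ≤ Real.exp (-3))
    (δ : ℝ) (hδ : δ = Real.sqrt (2 * ε - ε ^ 2))
    (u₁ u₂ : ℝ → ℝ)
    (hu₁ : u₁ = fun t => (1 + ε * Real.exp t / (1 - ε))⁻¹)
    (hu₂ : u₂ = fun t =>
      (Real.exp (-t) / ε) * (ε * δ - (1 - ε) * Real.log (1 - ε + ε * Real.exp t))) :
    ∀ t : ℝ, t > Real.log (1 / ε) →
      u₂ t < 0 ∧ |u₁ t / u₂ t| ≤ 2 / (t - Real.log (1 / ε)) := by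
  subst hu₁ hu₂
  -- numeric bound : ε ≤ 1/20
  have hε20 : ε ≤ 1/20 := by
    have h3 : (20:ℝ) ≤ Real.exp 3 := by
      have h := Real.exp_one_gt_d9
      have he3 : Real.exp 3 = Real.exp 1 * Real.exp 1 * Real.exp 1 := by
        rw [← Real.exp_add, ← Real.exp_add]; norm_num
      nlinarith [Real.exp_pos 1]
    have : Real.exp (-3) ≤ 1/20 := by
      rw [Real.exp_neg]
      have := inv_anti₀ (by norm_num : (0:ℝ) < 20) h3
      simpa using this
    linarith
  have h1ε : 0 < 1 - ε := by linarith
  intro t ht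
  simp only []
  set L := Real.log (1/ε) with hL
  have hs0 : 0 < t - L := sub_pos.mpr ht
  set x := ε * Real.exp t with hxdef
  have hx0 : 0 < x := by positivity
  have hlogx : Real.log x = t - L := by
    rw [hxdef, Real.log_mul (ne_of_gt hε0) (Real.exp_ne_zero t), Real.log_exp, hL,
      one_div, Real.log_inv]
    ring
  have hx1 : 1 < x := by
    calc (1:ℝ) = Real.exp 0 := Real.exp_zero.symm
    _ < Real.exp (t - L) := Real.exp_lt_exp.mpr hs0
    _ = x := by rw [← hlogx, Real.exp_log hx0]
  set A := 1 - ε + x with hAdef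
  have hxA : x < A := by rw [hAdef]; linarith
  have hA0 : 0 < A := by linarith
  have hA1 : 1 < A := by linarith
  -- δ bounds
  have hδ0 : 0 ≤ δ := hδ ▸ Real.sqrt_nonneg _
  have hδ1 : δ ≤ 1 := by
    rw [hδ]
    have h1 : 2 * ε - ε ^ 2 ≤ 1 := by nlinarith
    calc Real.sqrt (2 * ε - ε ^ 2) ≤ Real.sqrt 1 := Real.sqrt_le_sqrt h1
    _ = 1 := Real.sqrt_one
  -- log(2-ε) ≥ (1-ε)/(2-ε) ≥ 2ε/(1-ε)
  have h2e : (0:ℝ) < 2 - ε := by linarith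
  have hlog2 : 1 - (2-ε)⁻¹ ≤ Real.log (2-ε) := by
    have h := Real.log_le_sub_one_of_pos (show (0:ℝ) < (2-ε)⁻¹ by positivity)
    rw [Real.log_inv] at h
    have h2 : (2-ε)⁻¹ - 1 = -(1 - (2-ε)⁻¹) := by ring
    linarith
  have hq : (1-ε)/(2-ε) ≤ Real.log (2-ε) := by
    have : 1 - (2-ε)⁻¹ = (1-ε)/(2-ε) := by field_simp; ring
    linarith
  have hkey0 : 2*ε ≤ (1-ε) * Real.log (2-ε) := by
    have h1 : 2*ε ≤ (1-ε)*((1-ε)/(2-ε)) := by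
      rw [mul_div_assoc', le_div_iff₀ h2e]
      nlinarith
    have h2 := mul_le_mul_of_nonneg_left hq (le_of_lt h1ε)
    linarith
  -- key log inequality : (t - L) + log(2-ε) ≤ 2 log A
  have hkeylog : (t - L) + Real.log (2-ε) ≤ 2 * Real.log A := by
    have hA2 : x*(2-ε) ≤ A^2 := by rw [hAdef]; nlinarith
    have h := Real.log_le_log (by positivity) hA2
    rw [Real.log_mul (ne_of_gt hx0) (ne_of_gt h2e), Real.log_pow, hlogx] at h
    push_cast at h
    linarith
  set B := (1-ε) * Real.log A - ε*δ with hBdef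
  have hB2 : (1-ε)*(t-L) ≤ 2*B := by
    have h1 := mul_le_mul_of_nonneg_left hkeylog (le_of_lt h1ε)
    have h2 : ε*δ ≤ ε := by nlinarith
    rw [hBdef]; nlinarith
  have hB0 : 0 < B := by nlinarith
  clear_value x A B
  -- value of u₂
  have hxinv : x⁻¹ = Real.exp (-t) / ε := by
    rw [hxdef, mul_inv, Real.exp_neg]; ring
  have hu2 : (Real.exp (-t) / ε) * (ε * δ - (1 - ε) * Real.log A)
      = -(x⁻¹ * B) := by
    rw [hBdef, ← hxinv]; ring
  have hu2neg : (Real.exp (-t) / ε) * (ε * δ - (1 - ε) * Real.log A) < 0 := by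
    rw [hu2]
    have h : 0 < x⁻¹ * B := by positivity
    linarith
  refine ⟨hu2neg, ?_⟩
  -- value of u₁
  have hu1 : (1 + x / (1 - ε))⁻¹ = (1-ε)/A := by
    rw [hAdef, inv_eq_iff_eq_inv, eq_comm, inv_div]
    field_simp
  rw [hu1, hu2, abs_div, abs_of_pos (by positivity : (0:ℝ) < (1-ε)/A),
    abs_of_neg (show -(x⁻¹ * B) < 0 by
      have h : 0 < x⁻¹ * B := by positivity
      linarith), neg_neg]
  have lhs_eq : ((1-ε)/A)/(x⁻¹*B) = ((1-ε)*x)/(A*B) := by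
    field_simp
  rw [lhs_eq, div_le_div_iff₀ (by positivity) hs0]
  have key : ((1-ε)*(t-L))*x ≤ (2*B)*A :=
    mul_le_mul hB2 hxA.le hx0.le (by positivity)
  linarith [key]
end

section
/- For every real ε with 0 < ε ≤ e^{−3}, one has (1 + (ε³ − 1)·log ε) / (√(1 + (ε³ − 1)²) · √(1 + (log ε)²)) ≤ 2/√5. -/
/-- Final algebraic estimate of Theorem 1:
(1 + (ε³-1) log ε)/(√(1+(ε³-1)²) √(1+(log ε)²)) ≤ 2/√5 for 0 < ε ≤ e^{-3}. -/
theorem stmt_10 (ε : ℝ) (hε0 : 0 < ε) (hε1 : ε ≤ Real.exp (-3)) :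
    (1 + (ε ^ 3 - 1) * Real.log ε) /
      (Real.sqrt (1 + (ε ^ 3 - 1) ^ 2) * Real.sqrt (1 + (Real.log ε) ^ 2)) ≤
      2 / Real.sqrt 5 := by
  set L := Real.log ε with hLdef
  set a := ε ^ 3 - 1 with hadef
  have hL : L ≤ -3 := by
    have h := Real.log_le_log hε0 hε1
    simpa [Real.log_exp] using h
  have hε1' : ε < 1 := lt_of_le_of_lt hε1 (by
    have : Real.exp (-3) < Real.exp 0 := Real.exp_lt_exp.2 (by norm_num)
    simpa using this)
  have ha1 : -1 < a := by
    have : 0 < ε ^ 3 := by positivity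
    simp [hadef]; linarith
  have ha2 : a < 0 := by
    have : ε ^ 3 < 1 := pow_lt_one₀ hε0.le hε1' (by norm_num)
    simp [hadef]; linarith
  have h1a : (0:ℝ) < 1 + a ^ 2 := by positivity
  have h1L : (0:ℝ) < 1 + L ^ 2 := by positivity
  have hD : 0 < Real.sqrt (1 + a ^ 2) * Real.sqrt (1 + L ^ 2) := by
    positivity
  have hprod : Real.sqrt (1 + a ^ 2) * Real.sqrt (1 + L ^ 2)
      = Real.sqrt ((1 + a ^ 2) * (1 + L ^ 2)) :=
    (Real.sqrt_mul h1a.le _).symm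
  have h5 : (2:ℝ) / Real.sqrt 5 = Real.sqrt (4 / 5) := by
    have h4 : Real.sqrt 4 = 2 := by
      rw [show (4:ℝ) = 2 ^ 2 by norm_num, Real.sqrt_sq (by norm_num : (0:ℝ) ≤ 2)]
    rw [Real.sqrt_div (by norm_num : (0:ℝ) ≤ 4), h4]
  -- key inequality
  have hkey : (1 + a * L) ^ 2 ≤ 4 / 5 * ((1 + a ^ 2) * (1 + L ^ 2)) := by
    nlinarith [mul_nonneg (mul_nonneg (neg_nonneg.2 ha2.le) (by linarith : (0:ℝ) ≤ -L - 3)) (by linarith : (0:ℝ) ≤ -L - 1/3),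
      mul_nonneg (by linarith : (0:ℝ) ≤ a + 1) (by nlinarith : (0:ℝ) ≤ L ^ 2 - 1/4),
      mul_nonneg (mul_nonneg (by linarith : (0:ℝ) ≤ a + 1) (neg_nonneg.2 ha2.le)) (by nlinarith : (0:ℝ) ≤ L ^ 2 - 4)]
  have hN : 0 ≤ 1 + a * L := by nlinarith
  rw [div_le_iff₀ hD, hprod]
  calc 1 + a * L ≤ Real.sqrt ((1 + a * L) ^ 2) := by
        rw [Real.sqrt_sq hN]
    _ ≤ Real.sqrt (4 / 5 * ((1 + a ^ 2) * (1 + L ^ 2))) := Real.sqrt_le_sqrt hkey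
    _ = 2 / Real.sqrt 5 * Real.sqrt ((1 + a ^ 2) * (1 + L ^ 2)) := by
        rw [Real.sqrt_mul (by norm_num : (0:ℝ) ≤ 4/5), h5]
end

section
/- Let 0 < ε ≤ e^{−3}, set δ = √(2ε − ε²) and t* = 3·log(1/ε). Define u^ψ(t) = (u₁(t), u₂(t)) with u₁(t) = (1 + ε·e^t/(1−ε))^{−1}, u₂(t) = (e^{−t}/ε)·(ε·δ − (1−ε)·log(1 − ε + ε·e^t)), and u^φ(t) = (1, e^{−t} − 1). Then the normalized overlap satisfies |u₁(t*)·1 + u₂(t*)·(e^{−t*} − 1)| / (‖u^ψ(t*)‖ · ‖u^φ(t*)‖) ≤ 2/√5, where ‖·‖ is the Euclidean norm on ℝ². -/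
set_option maxHeartbeats 1600000 in
/-- Analytic content of Theorem 1: after time t* = 3 log(1/ε) the normalized overlap of
the two solutions u^ψ(t) and u^φ(t) = (1, e^{-t} - 1) has dropped to at most 2/√5. -/
theorem stmt_11 (ε : ℝ) (hε0 : 0 < ε) (hε1 : ε ≤ Real.exp (-3))
    (δ : ℝ) (hδ : δ = Real.sqrt (2 * ε - ε ^ 2))
    (tstar : ℝ) (htstar : tstar = 3 * Real.log (1 / ε))
    (u₁ u₂ : ℝ → ℝ)
    (hu₁ : u₁ = fun t => (1 + ε * Real.exp t / (1 - ε))⁻¹)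
    (hu₂ : u₂ = fun t =>
      (Real.exp (-t) / ε) * (ε * δ - (1 - ε) * Real.log (1 - ε + ε * Real.exp t))) :
    |u₁ tstar * 1 + u₂ tstar * (Real.exp (-tstar) - 1)| /
      (Real.sqrt ((u₁ tstar) ^ 2 + (u₂ tstar) ^ 2) *
        Real.sqrt (1 ^ 2 + (Real.exp (-tstar) - 1) ^ 2)) ≤
      2 / Real.sqrt 5 := by
  -- basic numeric bounds on ε
  have hexp3 : (20:ℝ) ≤ Real.exp 3 := by
    have h1 := Real.exp_one_gt_d9
    have h3 : Real.exp 3 = Real.exp 1 * Real.exp 1 * Real.exp 1 := by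
      rw [← Real.exp_add, ← Real.exp_add]; norm_num
    nlinarith [Real.exp_pos 1]
  have hε05 : ε ≤ 1/20 := by
    have h : Real.exp (-3) ≤ 1/20 := by
      rw [Real.exp_neg, inv_eq_one_div, div_le_div_iff₀ (Real.exp_pos 3) (by norm_num)]
      linarith
    linarith
  have h1ε : 0 < 1 - ε := by linarith
  -- value of exp(tstar)
  have hexp : Real.exp tstar = ε⁻¹ ^ 3 := by
    have h : tstar = Real.log (ε⁻¹ ^ 3) := by
      rw [Real.log_pow, htstar, one_div]; push_cast; ring
    rw [h, Real.exp_log (by positivity)]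
  have hexpneg : Real.exp (-tstar) = ε ^ 3 := by
    rw [Real.exp_neg, hexp, ← inv_pow, inv_inv]
  have harg : ε * Real.exp tstar = ε⁻¹ ^ 2 := by
    rw [hexp]; field_simp
  have hεinv : 0 < ε⁻¹ ^ 2 := by positivity
  -- bound on u₁
  have haval : u₁ tstar = (1 + ε⁻¹ ^ 2 / (1 - ε))⁻¹ := by
    simp only [hu₁]; rw [harg]
  have hXpos : 0 < 1 + ε⁻¹ ^ 2 / (1 - ε) := by
    have := div_pos hεinv h1ε; linarith
  have ha_pos : 0 < u₁ tstar := by rw [haval]; exact inv_pos.mpr hXpos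
  have hdivge : ε⁻¹ ^ 2 ≤ ε⁻¹ ^ 2 / (1 - ε) := by
    rw [le_div_iff₀ h1ε]
    nlinarith [mul_pos hεinv hε0]
  have ha_le : u₁ tstar ≤ ε ^ 2 := by
    rw [haval]
    calc (1 + ε⁻¹ ^ 2 / (1 - ε))⁻¹ ≤ (ε⁻¹ ^ 2)⁻¹ := by
          apply inv_anti₀ hεinv; linarith
      _ = ε ^ 2 := by rw [← inv_pow, inv_inv]
  -- value of u₂
  have h33 : ε ^ 3 / ε = ε ^ 2 := by field_simp
  have hbval : u₂ tstar = ε ^ 2 * (ε * δ - (1 - ε) * Real.log (1 - ε + ε⁻¹ ^ 2)) := by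
    simp only [hu₂]; rw [hexpneg, harg, h33]
  -- bound on the log term
  have hε2 : ε ^ 2 ≤ Real.exp (-6) := by
    have h6 : Real.exp (-6) = Real.exp (-3) * Real.exp (-3) := by
      rw [← Real.exp_add]; norm_num
    nlinarith [Real.exp_pos (-3)]
  have hmul : Real.exp 6 * ε ^ 2 ≤ 1 := by
    have h6 : Real.exp 6 * Real.exp (-6) = 1 := by rw [← Real.exp_add]; norm_num
    nlinarith [Real.exp_pos 6]
  have hexp6 : Real.exp 6 ≤ ε⁻¹ ^ 2 := by
    rw [inv_pow, ← one_div, le_div_iff₀ (by positivity : (0:ℝ) < ε ^ 2)]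
    exact hmul
  have hargpos : 0 < 1 - ε + ε⁻¹ ^ 2 := by nlinarith
  have hM : 6 ≤ Real.log (1 - ε + ε⁻¹ ^ 2) := by
    rw [Real.le_log_iff_exp_le hargpos]; linarith
  -- bounds on δ
  have hδnn : 0 ≤ δ := hδ ▸ Real.sqrt_nonneg _
  have hδsq : δ ^ 2 = 2 * ε - ε ^ 2 := by
    rw [hδ, Real.sq_sqrt]; nlinarith
  have hδle : δ ≤ 1/3 := by
    by_contra h
    push_neg at h
    have h9 : (1/3:ℝ) * (1/3) < δ * δ :=
      mul_lt_mul'' h h (by norm_num) (by norm_num)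
    have hdd : δ ^ 2 = δ * δ := sq δ
    linarith [hδsq, sq_nonneg ε]
  -- lower bound on -u₂
  have hB : 5 * ε ^ 2 ≤ -u₂ tstar := by
    rw [hbval]
    have h1 : (1 - ε) * 6 ≤ (1 - ε) * Real.log (1 - ε + ε⁻¹ ^ 2) :=
      mul_le_mul_of_nonneg_left hM h1ε.le
    have h2 : ε * δ ≤ (1/20) * (1/3) := mul_le_mul hε05 hδle hδnn (by norm_num)
    have h3 : (5:ℝ) ≤ (1 - ε) * Real.log (1 - ε + ε⁻¹ ^ 2) - ε * δ := by linarith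
    have h4 := mul_le_mul_of_nonneg_left h3 (sq_nonneg ε)
    linarith [h4]
  have hBpos : 0 < -u₂ tstar := lt_of_lt_of_le (by positivity) hB
  -- ε³ small
  have hε3 : ε ^ 3 ≤ 1/8000 := by
    have h := pow_le_pow_left₀ hε0.le hε05 3
    have h20 : ((1:ℝ)/20) ^ 3 = 1/8000 := by norm_num
    linarith
  rw [hexpneg]
  set B := -u₂ tstar with hBdef
  -- numerator
  have hNnn : 0 ≤ u₁ tstar * 1 + u₂ tstar * (ε ^ 3 - 1) := by
    have : u₂ tstar * (ε ^ 3 - 1) = B * (1 - ε ^ 3) := by rw [hBdef]; ring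
    nlinarith [mul_nonneg hBpos.le (by nlinarith : (0:ℝ) ≤ 1 - ε ^ 3)]
  have hNle : u₁ tstar * 1 + u₂ tstar * (ε ^ 3 - 1) ≤ 6/5 * B := by
    have h1 : u₂ tstar * (ε ^ 3 - 1) = B * (1 - ε ^ 3) := by rw [hBdef]; ring
    have h2 : B * (1 - ε ^ 3) ≤ B := by
      nlinarith [mul_nonneg hBpos.le (pow_nonneg hε0.le 3)]
    have h3 : u₁ tstar ≤ B / 5 := by
      have : ε ^ 2 ≤ B / 5 := by rw [hBdef]; linarith
      linarith
    linarith
  -- denominator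
  have hs1 : B ≤ Real.sqrt ((u₁ tstar) ^ 2 + (u₂ tstar) ^ 2) := by
    have h1 : Real.sqrt ((u₂ tstar) ^ 2) = B := by
      rw [Real.sqrt_sq_eq_abs, abs_of_nonpos (by linarith : u₂ tstar ≤ 0)]
    calc B = Real.sqrt ((u₂ tstar) ^ 2) := h1.symm
      _ ≤ _ := Real.sqrt_le_sqrt (by nlinarith [sq_nonneg (u₁ tstar)])
  have hs2 : (7/5:ℝ) ≤ Real.sqrt (1 ^ 2 + (ε ^ 3 - 1) ^ 2) := by
    rw [show ((7:ℝ)/5) = Real.sqrt ((7/5)^2) from (Real.sqrt_sq (by norm_num)).symm]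
    apply Real.sqrt_le_sqrt
    nlinarith [pow_nonneg hε0.le 3, sq_nonneg (ε ^ 3)]
  have hDle : 7/5 * B ≤ Real.sqrt ((u₁ tstar) ^ 2 + (u₂ tstar) ^ 2) *
      Real.sqrt (1 ^ 2 + (ε ^ 3 - 1) ^ 2) := by
    calc 7/5 * B = B * (7/5) := by ring
      _ ≤ _ := mul_le_mul hs1 hs2 (by norm_num) (Real.sqrt_nonneg _)
  -- final
  rw [abs_of_nonneg hNnn]
  have hstep : u₁ tstar * 1 + u₂ tstar * (ε ^ 3 - 1) ≤ 6/5 * B := hNle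
  have hfin : (u₁ tstar * 1 + u₂ tstar * (ε ^ 3 - 1)) /
      (Real.sqrt ((u₁ tstar) ^ 2 + (u₂ tstar) ^ 2) *
        Real.sqrt (1 ^ 2 + (ε ^ 3 - 1) ^ 2)) ≤ (6/5 * B) / (7/5 * B) :=
    div_le_div₀ (by positivity) hstep (by positivity) hDle
  have heq : (6/5 * B) / (7/5 * B) = 6/7 := by
    field_simp
  have hs5 : Real.sqrt 5 ≤ 7/3 := by
    nlinarith [Real.sq_sqrt (by norm_num : (0:ℝ) ≤ 5), Real.sqrt_nonneg 5]
  have hs5pos : 0 < Real.sqrt 5 := Real.sqrt_pos.mpr (by norm_num)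
  have h67 : (6:ℝ)/7 ≤ 2 / Real.sqrt 5 := by
    rw [div_le_div_iff₀ (by norm_num) hs5pos]; nlinarith
  linarith [hfin, heq ▸ hfin]
end

section
/- Let 0 < ε < 1, set δ = √(2ε − ε²), and define u₁(t) = (1 + ε·e^t/(1−ε))^{−1} and u₂(t) = (e^{−t}/ε)·(ε·δ − (1−ε)·log(1 − ε + ε·e^t)). Then the ratio u₁(t)/u₂(t) tends to 0 as t → ∞. -/
open Filter Real

/-- The component ratio S_ψ(t) = u₁(t)/u₂(t) tends to 0 as t → ∞. -/
theorem stmt_12 (ε : ℝ) (hε0 : 0 < ε) (hε1 : ε < 1)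
    (δ : ℝ) (hδ : δ = Real.sqrt (2 * ε - ε ^ 2))
    (u₁ u₂ : ℝ → ℝ)
    (hu₁ : u₁ = fun t => (1 + ε * Real.exp t / (1 - ε))⁻¹)
    (hu₂ : u₂ = fun t =>
      (Real.exp (-t) / ε) * (ε * δ - (1 - ε) * Real.log (1 - ε + ε * Real.exp t))) :
    Filter.Tendsto (fun t => u₁ t / u₂ t) Filter.atTop (nhds 0) := by
  have h1ε : (0:ℝ) < 1 - ε := by linarith
  -- rewrite the ratio
  have key : (fun t => u₁ t / u₂ t) = fun t =>
      (ε * (1 - ε) / ((1 - ε) * Real.exp (-t) + ε)) *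
        (ε * δ - (1 - ε) * Real.log (1 - ε + ε * Real.exp t))⁻¹ := by
    funext t
    subst hu₁ hu₂
    simp only
    rw [div_mul_eq_div_div]
    rw [div_eq_mul_inv _ (ε * δ - (1 - ε) * Real.log (1 - ε + ε * Real.exp t))]
    congr 1
    have het : (0:ℝ) < Real.exp t := Real.exp_pos t
    have hent : (0:ℝ) < Real.exp (-t) := Real.exp_pos (-t)
    have hden : (0:ℝ) < 1 + ε * Real.exp t / (1 - ε) := by positivity
    have hden2 : (0:ℝ) < (1 - ε) * Real.exp (-t) + ε := by positivity
    rw [Real.exp_neg]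
    field_simp
  rw [key]
  have hA : Tendsto (fun t => ε * (1 - ε) / ((1 - ε) * Real.exp (-t) + ε))
      atTop (nhds (ε * (1 - ε) / ε)) := by
    apply Tendsto.div tendsto_const_nhds
    · have := Real.tendsto_exp_neg_atTop_nhds_zero
      have h := this.const_mul (1 - ε)
      have h2 := h.add_const ε
      simpa using h2
    · exact ne_of_gt hε0
  have hL : Tendsto (fun t => ε * δ - (1 - ε) * Real.log (1 - ε + ε * Real.exp t))
      atTop atBot := by
    have harg : Tendsto (fun t => 1 - ε + ε * Real.exp t) atTop atTop := by
      apply tendsto_atTop_add_const_left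
      exact (Real.tendsto_exp_atTop).const_mul_atTop hε0
    have hlog : Tendsto (fun t => Real.log (1 - ε + ε * Real.exp t)) atTop atTop :=
      Real.tendsto_log_atTop.comp harg
    have hmul : Tendsto (fun t => (1 - ε) * Real.log (1 - ε + ε * Real.exp t))
        atTop atTop := hlog.const_mul_atTop h1ε
    have hneg := tendsto_neg_atTop_atBot.comp hmul
    have := tendsto_atBot_add_const_left atTop (ε * δ) hneg
    simpa [sub_eq_add_neg] using this
  have hB : Tendsto (fun t => (ε * δ - (1 - ε) * Real.log (1 - ε + ε * Real.exp t))⁻¹)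
      atTop (nhds 0) := by
    have hnegL := tendsto_neg_atBot_atTop.comp hL
    have h := hnegL.inv_tendsto_atTop
    have h2 := h.neg
    convert h2 using 2 with t
    simp [Function.comp]
    rw [← inv_neg]
    ring_nf
    simp
  have := hA.mul hB
  simpa using this
end

section
/- Let k be a real number with −1 ≤ k < 0. Then every complex root z of the polynomial z³ + z² + (1 − k)·z + 1 has strictly negative real part. -/
/-- For k ∈ [-1, 0), every complex root of z³ + z² + (1-k)z + 1 (the characteristic
polynomial of F₁) has strictly negative real part. -/
theorem stmt_18 (k : ℝ) (hk1 : -1 ≤ k) (hk2 : k < 0) (z : ℂ)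
    (hz : z ^ 3 + z ^ 2 + (1 - (k : ℂ)) * z + 1 = 0) :
    z.re < 0 := by
  by_contra hx
  push_neg at hx
  have h1 := congrArg Complex.re hz
  have h2 := congrArg Complex.im hz
  simp [pow_succ, Complex.mul_re, Complex.mul_im] at h1 h2
  rcases eq_or_ne z.im 0 with hy | hy
  · rw [hy] at h1
    nlinarith [mul_nonneg (mul_nonneg hx hx) hx, mul_nonneg hx hx,
      mul_nonneg hx (by linarith : (0:ℝ) ≤ 1 - k)]
  · have h3 : 3 * z.re ^ 2 - z.im ^ 2 + 2 * z.re + (1 - k) = 0 := by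
      have h4 : z.im * (3 * z.re ^ 2 - z.im ^ 2 + 2 * z.re + (1 - k)) = 0 := by ring_nf; nlinarith [h2]
      rcases mul_eq_zero.mp h4 with h | h
      · exact absurd h hy
      · exact h
    nlinarith [mul_nonneg (mul_nonneg hx hx) hx, sq_nonneg z.re, sq_nonneg z.im,
      mul_nonneg hx (sq_nonneg z.im), mul_nonneg hx hx]
end
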